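/- arXiv:2011.09866 — 2 statements merged into one kernel-verified Lean document; each statement's English description precedes it below -/
import Mathlib

section
/- [TxtPsdEx_C]_REC = [TxtGEx_C]_REC; that is, a class of recursive languages is Ex_C-learnable by a partial computable partially set-driven learner if and only if it is Ex_C-learnable by a partial computable Gold-style (full-information) learner. -/
/-!
`Psd ⊆ G`: from `T[i]` a Gold-style learner can compute `content(T[i])` and `i` and run the
partially set-driven learner on them.

`G ⊆ Psd`: first make the Gold-style learner total by running it, with step bound `|σ|`, on all
prefixes of `σ` and answering as on the longest one that halts; on a text this eventually agrees
with the original learner. By the Blum–Blum argument a total learner converging on all texts for `L`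
has a locking sequence `σ`: its content lies in `L` and no extension within `L` changes the guess,
so the guess on `σ` is the limit on a text starting with `σ`, hence a correct C-index. Given
`D = content(T[n])` and `n`, the new learner returns the guess on the least code `m < n` of a
sequence that looks locking as far as `D` and the extensions coded below `n` can tell. Every code
below the least code of a true locking sequence is eventually refuted, while that code itself passes
from some point on, so the new learner converges to a correct guess. The time parameter `n` is what
keeps this search finite.
-/

namespace InductiveInference

/-- `φ_e` : the `e`-th partial computable function, via the standard numbering
of `Nat.Partrec.Code`. -/
def phi (e : ℕ) : ℕ →. ℕ := (Denumerable.ofNat Nat.Partrec.Code e).eval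

/-- `W_e` : the domain of `φ_e`. -/
def Wset (e : ℕ) : Set ℕ := (phi e).Dom

/-- `e` is a C-index: `φ_e` is total with values in `{0,1}`. -/
def CIndex (e : ℕ) : Prop := ∀ x, phi e x = Part.some 0 ∨ phi e x = Part.some 1

/-- `C_e = {x | φ_e x = 1}`. -/
def Cset (e : ℕ) : Set ℕ := {x | phi e x = Part.some 1}

/-- A language is recursive (decidable). -/
def RecLang (L : Set ℕ) : Prop := ∃ f : ℕ → Bool, Computable f ∧ ∀ x, x ∈ L ↔ f x = true

/-- Texts: total functions `ℕ → ℕ ∪ {#}`; `none` is the pause symbol `#`. -/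
abbrev Text := ℕ → Option ℕ

/-- The content of a text: its range minus the pause symbol. -/
def content (T : Text) : Set ℕ := {x | ∃ n, T n = some x}

/-- The initial segment `T[n] = (T 0, …, T (n-1))`. -/
def initSeg (T : Text) (n : ℕ) : List (Option ℕ) := (List.range n).map T

/-- The (finite) content of the initial segment `T[n]`. -/
def fincontent (T : Text) (n : ℕ) : Finset ℕ := ((initSeg T n).filterMap id).toFinset

/-- A canonical numerical code for a finite set of naturals. -/
def setCode (D : Finset ℕ) : ℕ := Encodable.encode (D.sort (· ≤ ·))

/-- Learners: partial functions on (suitably coded) natural number inputs. -/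
abbrev Learner := ℕ →. ℕ

/-- The learner is partial computable. -/
def PartComputable (h : Learner) : Prop := Nat.Partrec h

/-- The learner is total computable. -/
def TotalComputable (h : Learner) : Prop := Nat.Partrec h ∧ ∀ x, (h x).Dom

/-- Hypothesis sequences (possibly undefined at some points). -/
abbrev HypSeq := ℕ → Part ℕ

/-- Gold-style (full-information) learning: `G(h,T)(i) = h(T[i])`. -/
def Gop (h : Learner) (T : Text) (i : ℕ) : Part ℕ :=
  h (Encodable.encode (initSeg T i))

/-- Partially set-driven learning: `Psd(h,T)(i) = h(content T[i], i)`. -/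
def Psdop (h : Learner) (T : Text) (i : ℕ) : Part ℕ :=
  h (Nat.pair (setCode (fincontent T i)) i)

/-- Set-driven learning: `Sd(h,T)(i) = h(content T[i])`. -/
def Sdop (h : Learner) (T : Text) (i : ℕ) : Part ℕ :=
  h (setCode (fincontent T i))

/-- Iterative learning: the input `none` codes the empty start sequence `ε`,
and `some (e, x)` codes the pair of previous hypothesis `e` and datum `x`. -/
def Itop (h : Learner) (T : Text) : ℕ → Part ℕ
  | 0 => h (Encodable.encode (none : Option (ℕ × Option ℕ)))
  | i + 1 => (Itop h T i).bind fun e =>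
      h (Encodable.encode (some (e, T i) : Option (ℕ × Option ℕ)))

/-- Transductive learning: the learner receives the single (coded) datum
`T i`; the output `0` codes the distinguished symbol `?`, and the output
`e + 1` codes the hypothesis `e`.  The value `?` of the hypothesis sequence
is represented by `Part.none`. -/
def Tdop (h : Learner) (T : Text) : ℕ → Part ℕ
  | 0 => Part.none
  | i + 1 => (h (Encodable.encode (T i))).bind fun v =>
      match v with
      | 0 => Tdop h T i
      | e + 1 => Part.some e

/-- `Ex_C`: syntactic convergence to a single correct C-index. -/
def ExC (p : HypSeq) (T : Text) : Prop :=
  ∃ n₀, (∀ n, n₀ ≤ n → p n = p n₀) ∧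
    ∃ e, p n₀ = Part.some e ∧ CIndex e ∧ Cset e = content T

/-- `Ex_W`: syntactic convergence to a single correct W-index. -/
def ExW (p : HypSeq) (T : Text) : Prop :=
  ∃ n₀, (∀ n, n₀ ≤ n → p n = p n₀) ∧
    ∃ e, p n₀ = Part.some e ∧ Wset e = content T

/-- `Bc_C`: semantic convergence to correct C-indices. -/
def BcC (p : HypSeq) (T : Text) : Prop :=
  ∃ n₀, ∀ n, n₀ ≤ n → ∃ e, p n = Part.some e ∧ CIndex e ∧ Cset e = content T

/-- `Bc_W`: semantic convergence to correct W-indices. -/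
def BcW (p : HypSeq) (T : Text) : Prop :=
  ∃ n₀, ∀ n, n₀ ≤ n → ∃ e, p n = Part.some e ∧ Wset e = content T

/-- `CInd`: every hypothesis output is a C-index. -/
def CIndRes (p : HypSeq) (_T : Text) : Prop :=
  ∀ i e, p i = Part.some e → CIndex e

/-- `T`: the always-true restriction. -/
def TrueRes (_p : HypSeq) (_T : Text) : Prop := True

abbrev InteractionOp := Learner → Text → HypSeq
abbrev Restriction := HypSeq → Text → Prop

/-- Conjunction of restrictions. -/
def andRes (δ δ' : Restriction) : Restriction := fun p T => δ p T ∧ δ' p T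

/-- `h` `Txtβδ`-learns `L`: on every text for `L` the restriction `δ` holds. -/
def Learns (β : InteractionOp) (δ : Restriction) (h : Learner) (L : Set ℕ) : Prop :=
  ∀ T : Text, content T = L → δ (β h T) T

/-- The restriction `α` holds for `h` on all texts whatsoever. -/
def OnAllTexts (β : InteractionOp) (α : Restriction) (h : Learner) : Prop :=
  ∀ T : Text, α (β h T) T

/-- A class of recursive languages. -/
def IsRecClass (ℒ : Set (Set ℕ)) : Prop := ∀ L ∈ ℒ, RecLang L

/-- `[𝒞Txtβδ]_REC`: classes of recursive languages learnable by some
learner from `C` under interaction operator `β` and restriction `δ`. -/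
def LearnableREC (C : Learner → Prop) (β : InteractionOp) (δ : Restriction) :
    Set (Set (Set ℕ)) :=
  {ℒ | IsRecClass ℒ ∧ ∃ h, C h ∧ ∀ L ∈ ℒ, Learns β δ h L}

/-- `[τ(α)𝒞Txtβδ]_REC`: as above, where additionally `α` must hold on
arbitrary texts. -/
def TauLearnableREC (C : Learner → Prop) (α : Restriction) (β : InteractionOp)
    (δ : Restriction) : Set (Set (Set ℕ)) :=
  {ℒ | IsRecClass ℒ ∧ ∃ h, C h ∧ OnAllTexts β α h ∧ ∀ L ∈ ℒ, Learns β δ h L}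

open Filter Encodable Denumerable

def seqContent (σ : List (Option ℕ)) : Set ℕ := {x | some x ∈ σ}

section Texts

variable {T : Text} {n : ℕ}

lemma seqContent_append (σ τ : List (Option ℕ)) :
    seqContent (σ ++ τ) = seqContent σ ∪ seqContent τ := by
  ext x
  simp [seqContent]

lemma seqContent_finite (σ : List (Option ℕ)) : (seqContent σ).Finite :=
  (List.finite_toSet σ.reduceOption).subset fun _ hx => List.reduceOption_mem_iff.2 hx

lemma reduceOption_subset_sort_iff {σ : List (Option ℕ)} {D : Finset ℕ} :
    σ.reduceOption ⊆ D.sort ↔ seqContent σ ⊆ D := by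
  simp [List.subset_def, Set.subset_def, seqContent, List.reduceOption_mem_iff]

lemma length_initSeg : (initSeg T n).length = n := by
  simp [initSeg]

lemma mem_initSeg {a : Option ℕ} : a ∈ initSeg T n ↔ ∃ i < n, T i = a := by
  simp [initSeg]

lemma take_initSeg {k : ℕ} (h : k ≤ n) : (initSeg T n).take k = initSeg T k := by
  simp [initSeg, ← List.map_take, List.take_range, h]

lemma eq_initSeg_of_prefix {σ : List (Option ℕ)} (h : σ <+: initSeg T n) :
    σ = initSeg T σ.length :=
  (List.prefix_iff_eq_take.1 h).trans (take_initSeg (h.length_le.trans_eq length_initSeg))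

lemma seqContent_initSeg : seqContent (initSeg T n) = fincontent T n := by
  ext x
  simp [seqContent, fincontent, List.mem_filterMap]

lemma mem_fincontent {x : ℕ} : x ∈ fincontent T n ↔ ∃ i < n, T i = some x := by
  rw [← Finset.mem_coe, ← seqContent_initSeg]
  exact mem_initSeg

lemma fincontent_subset_content : (fincontent T n : Set ℕ) ⊆ content T := fun _ hx =>
  let ⟨i, _, hi⟩ := mem_fincontent.1 hx
  ⟨i, hi⟩

lemma eventually_subset_fincontent {s : Set ℕ} (hs : s.Finite) (h : s ⊆ content T) :
    ∀ᶠ n in atTop, s ⊆ fincontent T n := by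
  refine (eventually_all_finite hs).2 fun x hx => ?_
  obtain ⟨i, hi⟩ := h hx
  filter_upwards [eventually_gt_atTop i] with n hn using mem_fincontent.2 ⟨i, hn, hi⟩

lemma exists_content_eq (L : Set ℕ) : ∃ T : Text, content T = L := by
  classical
  exact ⟨fun n => if n ∈ L then some n else none, by ext x; simp [content]⟩

def prepend (σ : List (Option ℕ)) (T : Text) : Text := fun i => σ[i]?.getD (T (i - σ.length))

lemma initSeg_prepend (σ : List (Option ℕ)) (T : Text) (n : ℕ) :
    initSeg (prepend σ T) (σ.length + n) = σ ++ initSeg T n := by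
  refine List.ext_getElem (by simp [length_initSeg]) fun i _ _ => ?_
  simp only [initSeg, List.getElem_map, List.getElem_range, prepend]
  rcases lt_or_ge i σ.length with hi | hi
  · simp [hi, List.getElem_append_left]
  · simp [hi, List.getElem_append_right]

lemma content_prepend (σ : List (Option ℕ)) (T : Text) :
    content (prepend σ T) = seqContent σ ∪ content T := by
  ext x
  simp only [content, seqContent, prepend, Set.mem_union, Set.mem_ofPred_eq]
  constructor
  · rintro ⟨i, hi⟩
    rcases lt_or_ge i σ.length with h | h
    · simp only [List.getElem?_eq_getElem h, Option.getD_some] at hi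
      exact .inl (hi ▸ List.getElem_mem h)
    · simp only [List.getElem?_eq_none h, Option.getD_none] at hi
      exact .inr ⟨_, hi⟩
  · rintro (h | ⟨i, hi⟩)
    · obtain ⟨i, hlt, hi⟩ := List.getElem_of_mem h
      exact ⟨i, by simp [List.getElem?_eq_getElem hlt, hi]⟩
    · exact ⟨σ.length + i, by simp [hi]⟩

lemma exists_initSeg_eq_of_prefix_chain {c : ℕ → List (Option ℕ)}
    (hc : ∀ n, c n <+: c (n + 1)) (hlen : ∀ n, n ≤ (c n).length) :
    ∃ T : Text, ∀ n, c n = initSeg T (c n).length := by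
  have hmono : ∀ m n, m ≤ n → c m <+: c n := fun m n hmn => by
    induction n, hmn using Nat.le_induction with
    | base => exact List.prefix_refl _
    | succ n _ ih => exact ih.trans (hc n)
  have hget : ∀ m n i (hm : i < (c m).length) (hn : i < (c n).length), (c m)[i] = (c n)[i] :=
    fun m n i hm hn => (le_total m n).elim (fun h => (hmono m n h).getElem hm)
      (fun h => ((hmono n m h).getElem hn).symm)
  refine ⟨fun i => (c (i + 1)).getD i none, fun n => ?_⟩
  refine List.ext_getElem length_initSeg.symm fun i hi _ => ?_
  have hi' : i < (c (i + 1)).length := (hlen (i + 1)).trans_lt' i.lt_succ_self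
  simp [initSeg, List.getElem?_eq_getElem hi', hget n (i + 1) i hi hi']

end Texts

section Locking

variable {G : List (Option ℕ) → ℕ} {L : Set ℕ} {P : ℕ → Prop}

def ConvergesOn (G : List (Option ℕ) → ℕ) (L : Set ℕ) (P : ℕ → Prop) : Prop :=
  ∀ T : Text, content T = L → ∃ e, P e ∧ ∀ᶠ n in atTop, G (initSeg T n) = e

def IsLockingSeq (G : List (Option ℕ) → ℕ) (L : Set ℕ) (σ : List (Option ℕ)) : Prop :=
  seqContent σ ⊆ L ∧ ∀ τ, seqContent τ ⊆ L → G (σ ++ τ) = G σ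

lemma exists_text_through_extensions {TL : Text} (ext : List (Option ℕ) → List (Option ℕ))
    (hext : ∀ σ, seqContent σ ⊆ content TL → seqContent (ext σ) ⊆ content TL) :
    ∃ T : Text, content T = content TL ∧ ∀ N, ∃ σ, N ≤ σ.length ∧ seqContent σ ⊆ content TL ∧
      σ ++ ext σ = initSeg T (σ ++ ext σ).length := by
  obtain ⟨c, hc_zero, hc_succ⟩ : ∃ c : ℕ → List (Option ℕ),
      c 0 = [] ∧ ∀ n, c (n + 1) = (c n ++ [TL n]) ++ ext (c n ++ [TL n]) :=
    ⟨fun n => Nat.rec [] (fun n σ => (σ ++ [TL n]) ++ ext (σ ++ [TL n])) n, rfl, fun _ => rfl⟩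
  have hTL : ∀ n, seqContent [TL n] ⊆ content TL := fun n x hx =>
    ⟨n, (List.mem_singleton.1 hx).symm⟩
  have hc_sub : ∀ n, seqContent (c n ++ [TL n]) ⊆ content TL := by
    intro n
    induction n with
    | zero => simpa [hc_zero] using hTL 0
    | succ n ih =>
      rw [seqContent_append, hc_succ, seqContent_append]
      exact Set.union_subset (Set.union_subset ih (hext _ ih)) (hTL _)
  have hmid : ∀ n, c n ++ [TL n] <+: c (n + 1) := fun n => hc_succ n ▸ List.prefix_append _ _
  have hlen : ∀ n, n ≤ (c n).length := by
    intro n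
    induction n with
    | zero => exact Nat.zero_le _
    | succ n ih => have := (hmid n).length_le; simp at this; omega
  obtain ⟨T, hT⟩ := exists_initSeg_eq_of_prefix_chain
    (fun n => (List.prefix_append _ _).trans (hmid n)) hlen
  refine ⟨T, Set.Subset.antisymm (fun x ⟨i, hi⟩ => ?_) (fun x ⟨n, hn⟩ => ?_), fun N => ?_⟩
  · refine (seqContent_append _ _ ▸ hc_sub (i + 1)) (Or.inl ?_)
    rw [seqContent, Set.mem_ofPred_eq, hT, mem_initSeg]
    exact ⟨i, (hlen (i + 1)).trans_lt' i.lt_succ_self, hi⟩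
  · have : some x ∈ c (n + 1) := (hmid n).subset (by simp [hn])
    rw [hT, mem_initSeg] at this
    obtain ⟨i, -, hi⟩ := this
    exact ⟨i, hi⟩
  · refine ⟨c N ++ [TL N], by simpa using (hlen N).trans (Nat.le_succ _), hc_sub N, ?_⟩
    rw [← hc_succ]
    exact hT _

/-- Blum and Blum: if no locking sequence existed, one could extend any sequence in `L` forever so
that `G` changes its mind at every stage, while also enumerating `L`. -/
theorem exists_isLockingSeq (hG : ConvergesOn G L P) : ∃ σ, IsLockingSeq G L σ := by
  by_contra! hno
  have hext : ∀ σ, seqContent σ ⊆ L → ∃ τ, seqContent τ ⊆ L ∧ G (σ ++ τ) ≠ G σ :=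
    fun σ hσ => by simpa [IsLockingSeq, hσ] using hno σ
  choose! ext hext_sub hext_ne using hext
  obtain ⟨TL, rfl⟩ := exists_content_eq L
  obtain ⟨T, hT, hseg⟩ := exists_text_through_extensions ext hext_sub
  obtain ⟨e, -, hev⟩ := hG T hT
  obtain ⟨N, hN⟩ := eventually_atTop.1 hev
  obtain ⟨σ, hNσ, hσ, hσT⟩ := hseg N
  have hσe : G σ = e := by
    rw [eq_initSeg_of_prefix (σ := σ) (hσT ▸ List.prefix_append _ _)]
    exact hN _ hNσ
  have hextσe : G (σ ++ ext σ) = e := by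
    rw [hσT]
    exact hN _ (hNσ.trans (List.prefix_append σ (ext σ)).length_le)
  exact hext_ne σ hσ (hextσe.trans hσe.symm)

theorem ConvergesOn.prop_of_isLockingSeq {σ : List (Option ℕ)} (hG : ConvergesOn G L P)
    (hσ : IsLockingSeq G L σ) : P (G σ) := by
  obtain ⟨TL, hTL⟩ := exists_content_eq L
  obtain ⟨e, he, hev⟩ := hG (prepend σ TL) (by rw [content_prepend, hTL, Set.union_eq_right.2 hσ.1])
  obtain ⟨N, hN⟩ := eventually_atTop.1 hev
  have hlocked : G (σ ++ initSeg TL N) = G σ :=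
    hσ.2 _ (seqContent_initSeg ▸ hTL ▸ fincontent_subset_content)
  rwa [← hlocked, ← initSeg_prepend, hN _ (Nat.le_add_left _ _)]

end Locking

section Totalize

open Nat.Partrec (Code)
open Nat.Partrec.Code (evaln)

def totalize (c : Code) (σ : List (Option ℕ)) : ℕ :=
  (evaln σ.length c (encode (σ.take
    (Nat.findGreatest (fun k => (evaln σ.length c (encode (σ.take k))).isSome) σ.length)))).getD 0

lemma primrec_totalize (c : Code) : Primrec (totalize c) := by
  have hrun : Primrec₂ fun (σ : List (Option ℕ)) k => evaln σ.length c (encode (σ.take k)) :=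
    (Nat.Partrec.Code.primrec_evaln.comp
      (((Primrec.list_length.comp Primrec.fst).pair (Primrec.const c)).pair
        (Primrec.encode.comp (Primrec.list_take.comp Primrec.snd Primrec.fst)))).to₂
  have hhalts : PrimrecRel fun (σ : List (Option ℕ)) k =>
      (evaln σ.length c (encode (σ.take k))).isSome :=
    primrecRel_iff_primrec_decide.2 ((Primrec.option_isSome.comp₂ hrun).of_eq fun _ _ => by simp)
  exact Primrec.option_getD.comp (hrun.comp Primrec.id
    (Primrec.nat_findGreatest Primrec.list_length hhalts)) (Primrec.const 0)

lemma totalize_eventually_eq {c : Code} {T : Text} {e : ℕ}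
    (h : ∀ᶠ n in atTop, Gop c.eval T n = Part.some e) :
    ∀ᶠ n in atTop, totalize c (initSeg T n) = e := by
  obtain ⟨n₀, hn₀⟩ := eventually_atTop.1 h
  simp only [Gop] at hn₀
  obtain ⟨k₀, hk₀⟩ := Nat.Partrec.Code.evaln_complete.1 (by
    rw [hn₀ n₀ le_rfl]; exact Part.mem_some e)
  filter_upwards [eventually_ge_atTop (max n₀ k₀)] with n hn
  set σ := initSeg T n
  have hσ : σ.length = n := length_initSeg
  have hn₀σ : n₀ ≤ σ.length := hσ ▸ le_of_max_le_left hn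
  have hhalts₀ : e ∈ evaln σ.length c (encode (σ.take n₀)) := by
    rw [take_initSeg (le_of_max_le_left hn), hσ]
    exact Nat.Partrec.Code.evaln_mono (le_of_max_le_right hn) hk₀
  set K := Nat.findGreatest (fun k => (evaln σ.length c (encode (σ.take k))).isSome) σ.length
  have hn₀K : n₀ ≤ K := Nat.le_findGreatest hn₀σ (Option.isSome_of_mem hhalts₀)
  obtain ⟨v, hv⟩ := Option.isSome_iff_exists.1 <|
    Nat.findGreatest_spec (P := fun k => (evaln σ.length c (encode (σ.take k))).isSome)
      hn₀σ (Option.isSome_of_mem hhalts₀)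
  have hve := Nat.Partrec.Code.evaln_sound hv
  rw [take_initSeg (hσ ▸ Nat.findGreatest_le _), hn₀ K hn₀K] at hve
  simp only [totalize]
  rw [← Part.mem_some_iff.1 hve]
  exact Option.getD_eq_iff.2 (.inl hv)

end Totalize

section PsdSimulation

variable (G : List (Option ℕ) → ℕ)

def IsPsdCandidate (D : List ℕ) (t m : ℕ) : Prop :=
  (ofNat (List (Option ℕ)) m).reduceOption ⊆ D ∧
    ∀ k < t, (ofNat (List (Option ℕ)) k).reduceOption ⊆ D →
      G (ofNat _ m ++ ofNat _ k) = G (ofNat _ m)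

instance (D : List ℕ) (t m : ℕ) : Decidable (IsPsdCandidate G D t m) := by
  unfold IsPsdCandidate
  infer_instance

def psdGuess (D : List ℕ) (t : ℕ) : ℕ :=
  G (ofNat (List (Option ℕ)) ((List.range t).findIdx fun m => decide (IsPsdCandidate G D t m)))

def psdLearner (n : ℕ) : ℕ :=
  psdGuess G (ofNat (List ℕ) n.unpair.1) n.unpair.2

variable {G}

lemma psdop_psdLearner (T : Text) (n : ℕ) :
    Psdop (psdLearner G) T n = Part.some (psdGuess G (fincontent T n).sort n) := by
  simp [Psdop, psdLearner, setCode]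

lemma findIdx_range_eq {p : ℕ → Bool} {m t : ℕ} (hm : m < t) (hpm : p m)
    (hlt : ∀ j < m, p j = false) : (List.range t).findIdx p = m :=
  (List.findIdx_eq (by simpa using hm)).2 ⟨by simpa using hpm, fun j hj => by simpa using hlt j hj⟩

variable {L : Set ℕ} {T : Text} {m : ℕ}

lemma IsLockingSeq.eventually_isPsdCandidate (hm : IsLockingSeq G L (ofNat _ m))
    (hT : content T = L) : ∀ᶠ n in atTop, IsPsdCandidate G (fincontent T n).sort n m := by
  filter_upwards [eventually_subset_fincontent (seqContent_finite _) (hT ▸ hm.1)] with n hn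
  refine ⟨reduceOption_subset_sort_iff.2 hn, fun k _ hk => hm.2 _ ?_⟩
  exact (reduceOption_subset_sort_iff.1 hk).trans (hT ▸ fincontent_subset_content)

lemma eventually_not_isPsdCandidate (hm : ¬ IsLockingSeq G L (ofNat _ m))
    (hT : content T = L) : ∀ᶠ n in atTop, ¬ IsPsdCandidate G (fincontent T n).sort n m := by
  by_cases hsub : seqContent (ofNat (List (Option ℕ)) m) ⊆ L
  · obtain ⟨τ, hτ, hne⟩ : ∃ τ, seqContent τ ⊆ L ∧ G (ofNat _ m ++ τ) ≠ G (ofNat _ m) := by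
      simpa [IsLockingSeq, hsub] using hm
    filter_upwards [eventually_gt_atTop (encode τ),
      eventually_subset_fincontent (seqContent_finite τ) (hT ▸ hτ)] with n hn hτn hcand
    have hτD : (ofNat (List (Option ℕ)) (encode τ)).reduceOption ⊆ (fincontent T n).sort := by
      simpa using reduceOption_subset_sort_iff.2 hτn
    exact hne (by simpa using hcand.2 (encode τ) hn hτD)
  · exact Eventually.of_forall fun n hcand =>
      hsub ((reduceOption_subset_sort_iff.1 hcand.1).trans (hT ▸ fincontent_subset_content))

theorem ConvergesOn.eventually_psdGuess_eq {P : ℕ → Prop} (hG : ConvergesOn G L P)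
    (hT : content T = L) :
    ∃ e, P e ∧ ∀ᶠ n in atTop, psdGuess G (fincontent T n).sort n = e := by
  classical
  have hex : ∃ m, IsLockingSeq G L (ofNat (List (Option ℕ)) m) :=
    let ⟨σ, hσ⟩ := exists_isLockingSeq hG
    ⟨encode σ, by rwa [ofNat_encode]⟩
  have hbefore : ∀ᶠ n in atTop, ∀ j ∈ Set.Iio (Nat.find hex),
      ¬ IsPsdCandidate G (fincontent T n).sort n j :=
    (eventually_all_finite (Set.finite_Iio _)).2 fun j hj =>
      eventually_not_isPsdCandidate (Nat.find_min hex hj) hT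
  refine ⟨_, hG.prop_of_isLockingSeq (Nat.find_spec hex), ?_⟩
  filter_upwards [eventually_gt_atTop (Nat.find hex),
    (Nat.find_spec hex).eventually_isPsdCandidate hT, hbefore] with n hn hcand hmin
  rw [psdGuess, findIdx_range_eq hn (decide_eq_true hcand)
    fun j hj => decide_eq_false (hmin j hj)]

end PsdSimulation

section PsdPrimrec

variable {G : List (Option ℕ) → ℕ}

lemma primrecRel_list_mem : PrimrecRel fun (x : ℕ) (l : List ℕ) => x ∈ l :=
  ((PrimrecRel.exists_mem_list Primrec.eq).comp Primrec.snd Primrec.fst).of_eq fun _ => by simp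

lemma primrecRel_list_subset : PrimrecRel fun l D : List ℕ => l ⊆ D :=
  (PrimrecRel.forall_mem_list primrecRel_list_mem).of_eq fun _ _ => by simp [List.subset_def]

lemma primrec_reduceOption : Primrec (@List.reduceOption ℕ) :=
  (Primrec.listFilterMap Primrec.id Primrec₂.right).of_eq fun _ => rfl

lemma primrec_psdGuess (hG : Primrec G) : Primrec₂ (psdGuess G) := by
  have hseq : Primrec (ofNat (List (Option ℕ))) := Primrec.ofNat _
  have hsub : PrimrecRel fun k (D : List ℕ) => (ofNat (List (Option ℕ)) k).reduceOption ⊆ D :=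
    primrecRel_list_subset.comp (primrec_reduceOption.comp (hseq.comp Primrec.fst)) Primrec.snd
  have hlocked : PrimrecRel fun k (q : (List ℕ × ℕ) × ℕ) =>
      (ofNat (List (Option ℕ)) k).reduceOption ⊆ q.1.1 →
        G (ofNat _ q.2 ++ ofNat _ k) = G (ofNat _ q.2) :=
    ((hsub.comp Primrec.fst (Primrec.fst.comp (Primrec.fst.comp Primrec.snd))).not.or
      (Primrec.eq.comp
        (hG.comp (Primrec.list_append.comp (hseq.comp (Primrec.snd.comp Primrec.snd))
          (hseq.comp Primrec.fst)))
        (hG.comp (hseq.comp (Primrec.snd.comp Primrec.snd))))).of_eq fun _ => imp_iff_not_or.symm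
  have hall : PrimrecPred fun q : (List ℕ × ℕ) × ℕ => ∀ k < q.1.2,
      (ofNat (List (Option ℕ)) k).reduceOption ⊆ q.1.1 →
        G (ofNat _ q.2 ++ ofNat _ k) = G (ofNat _ q.2) :=
    ((PrimrecRel.forall_mem_list hlocked).comp (Primrec.list_range.comp
      (Primrec.snd.comp Primrec.fst)) Primrec.id).of_eq fun _ => by simp only [List.mem_range, id]
  have hcand : PrimrecRel fun (a : List ℕ × ℕ) m => IsPsdCandidate G a.1 a.2 m :=
    ((hsub.comp Primrec.snd (Primrec.fst.comp Primrec.fst)).and hall).of_eq fun _ => Iff.rfl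
  exact hG.comp (hseq.comp
    (Primrec.list_findIdx (Primrec.list_range.comp Primrec.snd) hcand.decide))

lemma primrec_psdLearner (hG : Primrec G) : Primrec (psdLearner G) :=
  (primrec_psdGuess hG).comp ((Primrec.ofNat _).comp (Primrec.fst.comp Primrec.unpair))
    (Primrec.snd.comp Primrec.unpair)

end PsdPrimrec

section PsdInput

-- `Finset.sort` is not known to be primitive recursive; this computes `l.toFinset.sort` instead.
def sortedDedup (l : List ℕ) : List ℕ := (List.range (l.sum + 1)).filter (· ∈ l)

lemma sort_toFinset (l : List ℕ) : l.toFinset.sort = sortedDedup l :=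
  (Finset.sortedLT_sort _).eq_of_mem_iff
    (List.pairwise_lt_range.sublist List.filter_sublist).sortedLT fun a => by
      simpa [sortedDedup, Nat.lt_succ_iff] using List.le_sum_of_mem

lemma primrec_sortedDedup : Primrec sortedDedup := by
  have hsum : Primrec (List.sum : List ℕ → ℕ) :=
    (Primrec.list_foldr Primrec.id (Primrec.const 0) (Primrec.nat_add.comp
      (Primrec.fst.comp Primrec.snd) (Primrec.snd.comp Primrec.snd)).to₂).of_eq
      fun l => by simp [List.sum]
  exact (primrecRel_list_mem.listFilter.comp
    (Primrec.list_range.comp (Primrec.succ.comp hsum)) Primrec.id).of_eq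
    fun l => by simp [sortedDedup]

def psdInput (σ : List (Option ℕ)) : ℕ :=
  Nat.pair (encode (sortedDedup σ.reduceOption)) σ.length

lemma psdInput_initSeg (T : Text) (n : ℕ) :
    psdInput (initSeg T n) = Nat.pair (setCode (fincontent T n)) n := by
  rw [psdInput, setCode, fincontent, sort_toFinset, length_initSeg]
  rfl

lemma primrec_psdInput : Primrec psdInput :=
  Primrec₂.natPair.comp (Primrec.encode.comp (primrec_sortedDedup.comp primrec_reduceOption))
    Primrec.list_length

end PsdInput

lemma exC_iff {p : HypSeq} {T : Text} :
    ExC p T ↔ ∃ e, (CIndex e ∧ Cset e = content T) ∧ ∀ᶠ n in atTop, p n = Part.some e := by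
  constructor
  · rintro ⟨n₀, hconst, e, he, hCe⟩
    exact ⟨e, hCe, eventually_atTop.2 ⟨n₀, fun n hn => (hconst n hn).trans he⟩⟩
  · rintro ⟨e, hCe, hev⟩
    obtain ⟨n₀, hn₀⟩ := eventually_atTop.1 hev
    exact ⟨n₀, fun n hn => (hn₀ n hn).trans (hn₀ n₀ le_rfl).symm, e, hn₀ n₀ le_rfl, hCe⟩

theorem learnableREC_psd_subset_g :
    LearnableREC PartComputable Psdop ExC ⊆ LearnableREC PartComputable Gop ExC := by
  rintro ℒ ⟨hrec, h, hh, hlearn⟩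
  refine ⟨hrec, fun n => h (psdInput (ofNat (List (Option ℕ)) n)), ?_, fun L hL T hT => ?_⟩
  · exact Partrec.nat_iff.1 ((Partrec.nat_iff.2 hh).comp
      (primrec_psdInput.comp (Primrec.ofNat _)).to_comp)
  · have hsim : Gop (fun n => h (psdInput (ofNat (List (Option ℕ)) n))) T = Psdop h T := by
      funext n
      simp [Gop, Psdop, psdInput_initSeg]
    exact hsim ▸ hlearn L hL T hT

theorem learnableREC_g_subset_psd :
    LearnableREC PartComputable Gop ExC ⊆ LearnableREC PartComputable Psdop ExC := by
  rintro ℒ ⟨hrec, h, hh, hlearn⟩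
  obtain ⟨c, rfl⟩ := Nat.Partrec.Code.exists_code.1 hh
  refine ⟨hrec, psdLearner (totalize c), ?_, fun L hL T hT => ?_⟩
  · exact Partrec.nat_iff.1 (primrec_psdLearner (primrec_totalize c)).to_comp.partrec
  have hconv : ConvergesOn (totalize c) L fun e => CIndex e ∧ Cset e = L := fun T' hT' => by
    obtain ⟨e, he, hev⟩ := exC_iff.1 (hlearn L hL T' hT')
    exact ⟨e, hT' ▸ he, totalize_eventually_eq hev⟩
  obtain ⟨e, he, hev⟩ := hconv.eventually_psdGuess_eq hT
  exact exC_iff.2 ⟨e, hT ▸ he, by simpa [psdop_psdLearner] using hev⟩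

/-- `[TxtPsdEx_C]_REC = [TxtGEx_C]_REC`. -/
theorem psd_exC_eq_g_exC :
    LearnableREC PartComputable Psdop ExC =
      LearnableREC PartComputable Gop ExC :=
  learnableREC_psd_subset_g.antisymm learnableREC_g_subset_psd

end InductiveInference
end

section
/- There exists a class ℒ of recursive languages such that ℒ ∈ [TxtItEx_C]_REC but ℒ ∉ [TxtTdEx_C]_REC; that is, some partial computable iterative learner Ex_C-learns every member of ℒ, but no partial computable transductive learner Ex_C-learns every member of ℒ. -/
/-! The class `{{0}, {0, 1}}` separates the two models. An iterative learner can carry in its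
hypothesis the information whether `1` has been seen: it conjectures `{0}` until then and `{0, 1}`
afterwards. A transductive learner has no memory: on the text `0, 0, 0, …` its final hypothesis
must be output on the single datum `0`, so on `1, 0, 0, …` it converges to the same hypothesis
for `{0}`. -/

namespace InductiveInference

theorem RecLang.exists_cIndex {L : Set ℕ} (hL : RecLang L) : ∃ e, CIndex e ∧ Cset e = L := by
  obtain ⟨f, hf, hfL⟩ := hL
  let g : ℕ → ℕ := fun x => bif f x then 1 else 0
  have hg : Computable g := hf.cond (Computable.const 1) (Computable.const 0)
  obtain ⟨c, hc⟩ := Nat.Partrec.Code.exists_code.mp (Partrec.nat_iff.mp hg.partrec)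
  have hphi : phi (Encodable.encode c) = fun x => Part.some (g x) := by
    rw [phi, Denumerable.ofNat_encode, hc]; rfl
  refine ⟨Encodable.encode c, fun x => ?_, Set.ext fun x => ?_⟩
  · cases hx : f x <;> simp [hphi, g, hx]
  · cases hx : f x <;> simp [Cset, hphi, g, hx, hfL]

theorem recLang_of_finite {L : Set ℕ} (hL : L.Finite) : RecLang L := by
  obtain ⟨s, rfl⟩ := hL.exists_finset_coe
  exact ⟨fun x => decide (∃ a ∈ s.toList, a = x),
    ((PrimrecRel.exists_mem_list Primrec.eq).decide.comp (Primrec.const _) Primrec.id).to_comp,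
    fun x => by simp⟩

theorem ExC.of_eventually_eq {p : HypSeq} {T : Text} {n₀ e : ℕ}
    (hp : ∀ n ≥ n₀, p n = Part.some e) (he : CIndex e) (hC : Cset e = content T) : ExC p T :=
  ⟨n₀, fun n hn => (hp n hn).trans (hp n₀ le_rfl).symm, e, hp n₀ le_rfl, he, hC⟩

theorem ExC.cset_eq_of_eventually_eq {p : HypSeq} {T : Text} {m e : ℕ} (h : ExC p T)
    (hp : ∀ n ≥ m, p n = Part.some e) : Cset e = content T := by
  obtain ⟨n₀, hconst, e', he', -, hC⟩ := h
  have : Part.some e = Part.some e' := by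
    rw [← hp (max n₀ m) (le_max_right _ _), hconst _ (le_max_left _ _), he']
  rwa [Part.some_inj.mp this]

theorem content_const (a : ℕ) : content (fun _ => some a) = {a} := by
  ext x; simp [content, eq_comm]

section Iterative

variable (e₀ e₁ a : ℕ)

def switchStep (v : Option (ℕ × Option ℕ)) : ℕ :=
  (v.map fun p => if p.2 = some a then e₁ else p.1).getD e₀

def switchLearner : Learner := fun n =>
  ((Encodable.decode (α := Option (ℕ × Option ℕ)) n).map (switchStep e₀ e₁ a) : Option ℕ)

theorem switchLearner_encode (v : Option (ℕ × Option ℕ)) :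
    switchLearner e₀ e₁ a (Encodable.encode v) = Part.some (switchStep e₀ e₁ a v) := by
  simp [switchLearner]

theorem switchLearner_partComputable : PartComputable (switchLearner e₀ e₁ a) := by
  have hstep : Primrec (switchStep e₀ e₁ a) :=
    Primrec.option_getD.comp
      (Primrec.option_map Primrec.id
        (Primrec.ite (Primrec.eq.comp (Primrec.snd.comp Primrec.snd) (Primrec.const _))
          (Primrec.const e₁) (Primrec.fst.comp Primrec.snd)))
      (Primrec.const e₀)
  exact Partrec.nat_iff.mp
    (Computable.ofOption (Primrec.option_map Primrec.decode (hstep.comp Primrec.snd).to₂).to_comp)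

theorem itop_switchLearner (T : Text) (n : ℕ) :
    Itop (switchLearner e₀ e₁ a) T n = Part.some (if ∃ i < n, T i = some a then e₁ else e₀) := by
  induction n with
  | zero => rw [Itop, switchLearner_encode]; simp [switchStep]
  | succ n ih =>
    have hseen : (∃ i < n + 1, T i = some a) ↔ T n = some a ∨ ∃ i < n, T i = some a := by
      simp only [Nat.lt_succ_iff_lt_or_eq, or_and_right, exists_or, exists_eq_left, or_comm]
    rw [Itop, ih, Part.bind_some, switchLearner_encode]
    simp only [hseen]
    by_cases ha : T n = some a <;> simp [switchStep, ha]

variable {e₀ e₁ a}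

theorem exC_itop_switchLearner_of_notMem {T : Text} (ha : a ∉ content T) (he : CIndex e₀)
    (hC : Cset e₀ = content T) : ExC (Itop (switchLearner e₀ e₁ a) T) T :=
  ExC.of_eventually_eq (n₀ := 0)
    (fun n _ => by rw [itop_switchLearner, if_neg fun ⟨i, _, hi⟩ => ha ⟨i, hi⟩]) he hC

theorem exC_itop_switchLearner_of_mem {T : Text} (ha : a ∈ content T) (he : CIndex e₁)
    (hC : Cset e₁ = content T) : ExC (Itop (switchLearner e₀ e₁ a) T) T := by
  obtain ⟨m, hm⟩ := ha
  exact ExC.of_eventually_eq (n₀ := m + 1)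
    (fun n hn => by rw [itop_switchLearner, if_pos ⟨m, hn, hm⟩]) he hC

end Iterative

theorem pair_mem_learnableREC_itop_exC {L₀ L₁ : Set ℕ} {a : ℕ} (hL₀ : RecLang L₀)
    (hL₁ : RecLang L₁) (ha₀ : a ∉ L₀) (ha₁ : a ∈ L₁) :
    {L₀, L₁} ∈ LearnableREC PartComputable Itop ExC := by
  obtain ⟨e₀, he₀, hC₀⟩ := hL₀.exists_cIndex
  obtain ⟨e₁, he₁, hC₁⟩ := hL₁.exists_cIndex
  refine ⟨by rintro L (rfl | rfl) <;> assumption, switchLearner e₀ e₁ a,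
    switchLearner_partComputable e₀ e₁ a, ?_⟩
  rintro L (rfl | rfl) T rfl
  · exact exC_itop_switchLearner_of_notMem ha₀ he₀ hC₀
  · exact exC_itop_switchLearner_of_mem ha₁ he₁ hC₁

section Transductive

variable {h : Learner} {T : Text}

theorem exists_lt_of_tdop_eq_some {e : ℕ} :
    ∀ {n}, Tdop h T n = Part.some e → ∃ i < n, h (Encodable.encode (T i)) = Part.some (e + 1)
  | 0, he => absurd he.symm (Part.some_ne_none e)
  | n + 1, he => by
    obtain ⟨v, hv, he⟩ := Part.mem_bind_iff.mp (Part.eq_some_iff.mp he)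
    rcases v with _ | w
    · obtain ⟨i, hi, hTi⟩ := exists_lt_of_tdop_eq_some (Part.eq_some_iff.mpr he)
      exact ⟨i, hi.trans n.lt_succ_self, hTi⟩
    · rw [Part.mem_some_iff.mp he]
      exact ⟨n, n.lt_succ_self, Part.eq_some_iff.mpr hv⟩

theorem tdop_succ_of_eq_some {i e : ℕ} (hi : h (Encodable.encode (T i)) = Part.some (e + 1)) :
    Tdop h T (i + 1) = Part.some e := by
  rw [Tdop, hi, Part.bind_some]

theorem content_eq_singleton_of_exC_tdop {a m : ℕ} (hT : ∀ i ≥ m, T i = some a)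
    (hconst : ExC (Tdop h fun _ => some a) fun _ => some a) (hTex : ExC (Tdop h T) T) :
    content T = {a} := by
  obtain ⟨n₀, -, e, he, -, hC⟩ := hconst
  obtain ⟨-, -, hae⟩ := exists_lt_of_tdop_eq_some he
  have hlim : ∀ n ≥ m + 1, Tdop h T n = Part.some e := by
    intro n hn
    obtain ⟨k, rfl⟩ : ∃ k, n = k + 1 := ⟨n - 1, by omega⟩
    exact tdop_succ_of_eq_some (by rwa [hT k (by omega)])
  rw [← hTex.cset_eq_of_eventually_eq hlim, hC, content_const]

end Transductive

theorem pair_notMem_learnableREC_tdop_exC (C : Learner → Prop) {a m : ℕ} {T : Text}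
    (hT : ∀ i ≥ m, T i = some a) (hne : content T ≠ {a}) :
    {{a}, content T} ∉ LearnableREC C Tdop ExC := by
  rintro ⟨-, h, -, hh⟩
  exact hne (content_eq_singleton_of_exC_tdop hT (hh {a} (by simp) _ (content_const a))
    (hh _ (by simp) T rfl))

/-- There is a class of recursive languages in `[TxtItEx_C]_REC` but not in
`[TxtTdEx_C]_REC`. -/
theorem it_exC_not_td_exC :
    ∃ ℒ : Set (Set ℕ),
      ℒ ∈ LearnableREC PartComputable Itop ExC ∧
      ℒ ∉ LearnableREC PartComputable Tdop ExC := by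
  let T : Text := fun n => some (if n = 0 then 1 else 0)
  have hT : content T = {0, 1} := by
    ext x
    refine ⟨fun ⟨n, hn⟩ => ?_, ?_⟩
    · by_cases n = 0 <;> simp_all [T, eq_comm]
    · rintro (rfl | rfl)
      exacts [⟨1, rfl⟩, ⟨0, rfl⟩]
  refine ⟨{{0}, {0, 1}}, pair_mem_learnableREC_itop_exC (recLang_of_finite (Set.toFinite _))
    (recLang_of_finite (Set.toFinite _)) (a := 1) (by simp) (by simp), ?_⟩
  rw [← hT]
  refine pair_notMem_learnableREC_tdop_exC _ (m := 1) (fun i hi => ?_) ?_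
  · exact congrArg some (if_neg (Nat.one_le_iff_ne_zero.mp hi))
  · simp [hT, Set.ext_iff]

end InductiveInference
end
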